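/- arXiv:2602.14383 — 4 statements merged into one kernel-verified Lean document; each statement's English description precedes it below -/
import Mathlib

section
/- If an inverse system ⋯ → E_3 → E_2 → E_1 of abelian groups satisfies the Mittag-Leffler condition, then the map 1 − p : ∏_{k=1}^∞ E_k → ∏_{k=1}^∞ E_k is surjective, where p is the shift map sending (x_1, x_2, x_3, …) to (f_1(x_2), f_2(x_3), …); consequently there is a short exact sequence 0 → lim E_* → ∏ E_k → ∏ E_k → 0. -/
/-!
STATEMENT 1: If an inverse system ⋯ → E 2 → E 1 → E 0 of abelian groups
satisfies the Mittag-Leffler condition, then the map `1 - p` on `∏ E k` is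
surjective, where `p (x) k = f k (x (k+1))`; consequently there is a short
exact sequence `0 → lim E_* → ∏ E_k → ∏ E_k → 0` (the inverse limit being
the kernel of `1 - p`, i.e. the group of compatible families).
-/

theorem stmt1
    (E : ℕ → Type) [∀ i, AddCommGroup (E i)]
    (f : ∀ i, E (i + 1) →+ E i)
    (g : ∀ ⦃i j : ℕ⦄, i ≤ j → (E j →+ E i))
    (hg_id : ∀ i, g (le_refl i) = AddMonoidHom.id (E i))
    (hg_comp : ∀ ⦃i j : ℕ⦄ (h : i ≤ j),
      g (h.trans (Nat.le_succ j)) = (g h).comp (f j))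
    -- the Mittag-Leffler condition
    (ML : ∀ i : ℕ, ∃ j : ℕ, ∃ hij : i ≤ j, ∀ s : ℕ, ∀ hjs : j ≤ s,
      AddMonoidHom.range (g (hij.trans hjs)) = AddMonoidHom.range (g hij)) :
    -- `1 - p` is surjective on the product, and its kernel consists exactly of
    -- the compatible families, i.e. the inverse limit; together with the
    -- (tautologically injective) inclusion of the kernel this is the short
    -- exact sequence `0 → lim E_* → ∏ E_k → ∏ E_k → 0`.
    Function.Surjective (fun x : (∀ i, E i) => fun i => x i - f i (x (i + 1))) ∧
      ∀ x : (∀ i, E i),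
        ((fun i => x i - f i (x (i + 1))) = 0 ↔ ∀ i, x i = f i (x (i + 1))) := by
  classical
  -- general composition lemma
  have hcomp : ∀ (i k : ℕ) (hik : i ≤ k) (m : ℕ) (hkm : k ≤ m) (a : E m),
      g (hik.trans hkm) a = g hik (g hkm a) := by
    intro i k hik m hkm
    induction m, hkm using Nat.le_induction with
    | base =>
      intro a
      rw [hg_id]
      rfl
    | succ m hkm ih =>
      intro a
      have h1 : g (hik.trans hkm) (f m a) = g hik (g hkm (f m a)) := ih (f m a)
      have h2 := congrFun (congrArg (fun h => h.toFun) (hg_comp (hik.trans hkm))) a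
      have h3 := congrFun (congrArg (fun h => h.toFun) (hg_comp hkm)) a
      exact h2.trans (h1.trans (congrArg (g hik) h3.symm))
  have hfg : ∀ (i : ℕ) (a : E (i + 1)), g (Nat.le_succ i) a = f i a := by
    intro i a
    have h2 := congrFun (congrArg (fun h => h.toFun) (hg_comp (le_refl i))) a
    have h3 := congrFun (congrArg (fun h => h.toFun) (hg_id i)) (f i a)
    exact h2.trans h3
  constructor
  · -- surjectivity
    intro y
    choose j0 hj0le hj0 using ML
    set j : ℕ → ℕ := fun i => max (j0 i) (i + 1) with hjdef
    have hle : ∀ i, i + 1 ≤ j i := fun i => le_max_right _ _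
    have hle' : ∀ i, i ≤ j i := fun i => (Nat.le_succ i).trans (hle i)
    -- the stable images
    have hstab : ∀ (i s : ℕ) (hs : i ≤ s), j i ≤ s →
        (g hs).range = (g (hle' i)).range := by
      intro i s hs h
      have h1 : j0 i ≤ s := (le_max_left _ _).trans h
      have h2 : j0 i ≤ j i := le_max_left _ _
      have e1 := hj0 i s h1
      have e2 := hj0 i (j i) h2
      exact e1.trans e2.symm
    set F : ∀ i, AddSubgroup (E i) := fun i => (g (hle' i)).range with hFdef
    have hA : ∀ (i k : ℕ) (hik : i ≤ k), j i ≤ k → ∀ a : E k, g hik a ∈ F i := by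
      intro i k hik h a
      show (g hik) a ∈ (g (hle' i)).range
      rw [← hstab i k hik h]
      exact ⟨a, rfl⟩
    -- f maps F (i+1) into F i
    have hB : ∀ (i : ℕ) (b : E (i + 1)), b ∈ F (i + 1) → f i b ∈ F i := by
      intro i b hb
      have hK1 : j i ≤ max (j i) (j (i + 1)) := le_max_left _ _
      have hK2 : j (i + 1) ≤ max (j i) (j (i + 1)) := le_max_right _ _
      have hi1K : i + 1 ≤ max (j i) (j (i + 1)) := (hle' (i + 1)).trans hK2
      have hiK : i ≤ max (j i) (j (i + 1)) := (Nat.le_succ i).trans hi1K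
      have hb' : b ∈ (g (hle' (i + 1))).range := hb
      rw [← hstab (i + 1) _ hi1K hK2] at hb'
      obtain ⟨c, rfl⟩ := hb'
      have key : f i (g hi1K c) = g hiK c := by
        rw [← hfg i (g hi1K c)]
        exact (hcomp i (i + 1) (Nat.le_succ i) _ hi1K c).symm
      rw [key]
      exact hA i _ hiK hK1 c
    -- f maps F (i+1) onto F i
    have hC : ∀ (i : ℕ) (c : E i), c ∈ F i →
        ∃ b : E (i + 1), b ∈ F (i + 1) ∧ f i b = c := by
      intro i c hc
      have hK1 : j i ≤ max (j i) (j (i + 1)) := le_max_left _ _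
      have hK2 : j (i + 1) ≤ max (j i) (j (i + 1)) := le_max_right _ _
      have hi1K : i + 1 ≤ max (j i) (j (i + 1)) := (hle' (i + 1)).trans hK2
      have hiK : i ≤ max (j i) (j (i + 1)) := (Nat.le_succ i).trans hi1K
      have hc' : c ∈ (g (hle' i)).range := hc
      rw [← hstab i _ hiK hK1] at hc'
      obtain ⟨a, rfl⟩ := hc'
      refine ⟨g hi1K a, hA (i + 1) _ hi1K hK2 a, ?_⟩
      rw [← hfg i (g hi1K a)]
      exact (hcomp i (i + 1) (Nat.le_succ i) _ hi1K a).symm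
    -- the truncated-sum correction
    set G : ∀ i k, E k →+ E i := fun i k => if h : i ≤ k then g h else 0 with hGdef
    have hGsucc : ∀ (i k : ℕ), i + 1 ≤ k → ∀ a : E k,
        f i (G (i + 1) k a) = G i k a := by
      intro i k h a
      rw [hGdef]
      simp only [dif_pos h, dif_pos ((Nat.le_succ i).trans h)]
      rw [← hfg i (g h a)]
      exact (hcomp i (i + 1) (Nat.le_succ i) k h a).symm
    have hGg : ∀ (i k : ℕ) (h : i ≤ k) (a : E k), G i k a = g h a := by
      intro i k h a
      rw [hGdef]; simp only [dif_pos h]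
    obtain ⟨z, hzdef⟩ : ∃ z : ∀ i, E i,
        ∀ i, z i = ∑ k ∈ Finset.Ico i (j i), G i k (y k) :=
      ⟨_, fun i => rfl⟩
    have hfz : ∀ i, f i (z (i + 1)) = ∑ k ∈ Finset.Ico (i + 1) (j (i + 1)), G i k (y k) := by
      intro i
      rw [hzdef, map_sum]
      refine Finset.sum_congr rfl fun k hk => ?_
      exact hGsucc i k (Finset.mem_Ico.mp hk).1 (y k)
    have hz : ∀ i, z i = y i + ∑ k ∈ Finset.Ico (i + 1) (j i), G i k (y k) := by
      intro i
      rw [hzdef, Finset.sum_eq_sum_Ico_succ_bot (Nat.lt_of_succ_le (hle i))]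
      congr 1
      rw [hGg i i (le_refl i) (y i), hg_id]
      rfl
    have hD : ∀ i, z i - f i (z (i + 1)) - y i ∈ F i := by
      intro i
      rw [hz i, hfz i]
      have heq : y i + (∑ k ∈ Finset.Ico (i + 1) (j i), G i k (y k)) -
          (∑ k ∈ Finset.Ico (i + 1) (j (i + 1)), G i k (y k)) - y i =
          (∑ k ∈ Finset.Ico (i + 1) (j i), G i k (y k)) -
          (∑ k ∈ Finset.Ico (i + 1) (j (i + 1)), G i k (y k)) := by abel
      rw [heq]
      rcases le_total (j i) (j (i + 1)) with h | h
      · rw [← Finset.sum_Ico_consecutive (fun k => G i k (y k)) (hle i) h]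
        have : (∑ k ∈ Finset.Ico (i + 1) (j i), G i k (y k)) -
            ((∑ k ∈ Finset.Ico (i + 1) (j i), G i k (y k)) +
             ∑ k ∈ Finset.Ico (j i) (j (i + 1)), G i k (y k)) =
            -(∑ k ∈ Finset.Ico (j i) (j (i + 1)), G i k (y k)) := by abel
        rw [this]
        refine neg_mem (sum_mem fun k hk => ?_)
        obtain ⟨h1, _⟩ := Finset.mem_Ico.mp hk
        have hik : i ≤ k := (hle' i).trans h1
        rw [hGg i k hik (y k)]
        exact hA i k hik h1 (y k)
      · rw [← Finset.sum_Ico_consecutive (fun k => G i k (y k)) (hle' (i + 1)) h]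
        have : ((∑ k ∈ Finset.Ico (i + 1) (j (i + 1)), G i k (y k)) +
             ∑ k ∈ Finset.Ico (j (i + 1)) (j i), G i k (y k)) -
            (∑ k ∈ Finset.Ico (i + 1) (j (i + 1)), G i k (y k)) =
            ∑ k ∈ Finset.Ico (j (i + 1)) (j i), G i k (y k) := by abel
        rw [this]
        refine sum_mem fun k hk => ?_
        obtain ⟨h1, _⟩ := Finset.mem_Ico.mp hk
        have hi1k : i + 1 ≤ k := (hle' (i + 1)).trans h1
        rw [← hGsucc i k hi1k (y k)]
        refine hB i _ ?_
        rw [hGg (i + 1) k hi1k (y k)]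
        exact hA (i + 1) k hi1k h1 (y k)
    -- construct the corrector by recursion, using surjectivity on stable images
    obtain ⟨W, hW⟩ : ∃ W : ∀ i, E i,
        ∀ i, f i (W (i + 1)) = W i + (z i - f i (z (i + 1)) - y i) := by
      have key : ∀ (i : ℕ) (a : E i), a ∈ F i →
          ∃ b : E (i + 1), b ∈ F (i + 1) ∧
            f i b = a + (z i - f i (z (i + 1)) - y i) :=
        fun i a ha => hC i _ (add_mem ha (hD i))
      choose step hstep1 hstep2 using key
      exact ⟨fun n => (Nat.rec (motive := fun n => {a : E n // a ∈ F n})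
          ⟨0, zero_mem _⟩
          (fun m p => ⟨step m p.1 p.2, hstep1 m p.1 p.2⟩) n).1,
        fun i => hstep2 i _ _⟩
    refine ⟨fun i => z i + W i, ?_⟩
    funext i
    show z i + W i - f i (z (i + 1) + W (i + 1)) = y i
    rw [map_add, hW i]
    abel
  · -- description of the kernel
    intro x
    constructor
    · intro h i
      have := congrFun h i
      simpa [sub_eq_zero] using this
    · intro h
      funext i
      simpa [sub_eq_zero] using h i
end

section
/- Let T, R, S be triangulated categories with T containing full triangulated subcategories R and S, and set U = S ∩ R. If every morphism from an object of R to an object of S factors through some object of U, then the induced functor J : R/U → T/S between Verdier quotients is fully faithful. -/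
/-!
Both Verdier quotients are computed by calculi of fractions. Without the octahedral axiom the
class `trW` need not be closed under composition, but its multiplicative closure still admits
left and right calculi of fractions and has the same localization.

The factorization hypothesis is used in one way: given `s : Z ⟶ M` in the closure for `S` and
`d : ι X ⟶ M`, factor the composite `ι X ⟶ M ⟶ cone s` as `ι a ≫ b` with `a : X ⟶ Z₀` and `U Z₀`.
The fibre `c : X' ⟶ X` of `a` has cone in `U`, and `ι c ≫ d` lifts through `s`. Applied to the
denominator of a right fraction this gives fullness. Applied to a morphism in the closure that
equalizes `ι f₁` and `ι f₂` it gives faithfulness.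
-/

open CategoryTheory CategoryTheory.Limits CategoryTheory.Pretriangulated
  CategoryTheory.Triangulated

namespace CategoryTheory

open Category

section

variable {C D : Type*} [Category C] [Category D]

lemma Functor.IsLocalization.of_le (L : C ⥤ D) {W W' : MorphismProperty C} [L.IsLocalization W]
    (h : W ≤ W') (hW' : W'.IsInvertedBy L) : L.IsLocalization W' :=
  of_equivalence_source L W L W' Equivalence.refl (fun _ _ f hf ↦ W'.le_isoClosure _ (h f hf))
    hW' L.leftUnitor

instance Functor.IsLocalization.multiplicativeClosure (L : C ⥤ D) (W : MorphismProperty C)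
    [L.IsLocalization W] : L.IsLocalization W.multiplicativeClosure :=
  of_le L W.le_multiplicativeClosure
    ((W.multiplicativeClosure_le_iff ((MorphismProperty.isomorphisms D).inverseImage L)).2
      (Localization.inverts L W))

namespace MorphismProperty

variable (W : MorphismProperty C)

lemma hasLeftCalculusOfFractions_multiplicativeClosure
    (hOre : ∀ ⦃X Y : C⦄ (φ : W.RightFraction X Y),
      ∃ (ψ : W.LeftFraction X Y), φ.f ≫ ψ.s = φ.s ≫ ψ.f)
    (hext : ∀ ⦃X' X Y : C⦄ (f₁ f₂ : X ⟶ Y) (s : X' ⟶ X) (_ : W s) (_ : s ≫ f₁ = s ≫ f₂),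
      ∃ (Y' : C) (t : Y ⟶ Y') (_ : W t), f₁ ≫ t = f₂ ≫ t) :
    W.multiplicativeClosure.HasLeftCalculusOfFractions where
  exists_leftFraction X Y φ := by
    obtain ⟨s, hs, f⟩ := φ
    induction hs generalizing Y with
    | of s hs =>
      obtain ⟨⟨f', s', hs'⟩, fac⟩ := hOre (RightFraction.mk s hs f)
      exact ⟨LeftFraction.mk f' s' (.of _ hs'), fac⟩
    | id X => exact ⟨LeftFraction.mk f (𝟙 Y) (.id Y), by simp⟩
    | comp_of s₁ s₂ _ hs₂ ih =>
      obtain ⟨⟨f₁, t₁, ht₁⟩, fac₁⟩ := ih _ f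
      obtain ⟨⟨f₂, t₂, ht₂⟩, fac₂⟩ := hOre (RightFraction.mk s₂ hs₂ f₁)
      exact ⟨LeftFraction.mk f₂ (t₁ ≫ t₂) (.comp_of _ _ ht₁ ht₂), by
        simp [reassoc_of% fac₁, fac₂]⟩
  ext X' X Y f₁ f₂ s hs fac := by
    induction hs generalizing Y with
    | of s hs =>
      obtain ⟨Y', t, ht, fac'⟩ := hext f₁ f₂ s hs fac
      exact ⟨Y', t, .of _ ht, fac'⟩
    | id X => exact ⟨Y, 𝟙 Y, .id Y, by simpa using fac⟩
    | comp_of s₁ s₂ _ hs₂ ih =>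
      obtain ⟨Y₁, t₁, ht₁, fac₁⟩ := ih _ (s₂ ≫ f₁) (s₂ ≫ f₂) (by simpa using fac)
      obtain ⟨Y₂, t₂, ht₂, fac₂⟩ := hext (f₁ ≫ t₁) (f₂ ≫ t₁) s₂ hs₂ (by simpa using fac₁)
      exact ⟨Y₂, t₁ ≫ t₂, .comp_of _ _ ht₁ ht₂, by simpa using fac₂⟩

lemma hasRightCalculusOfFractions_multiplicativeClosure
    (hOre : ∀ ⦃X Y : C⦄ (φ : W.LeftFraction X Y),
      ∃ (ψ : W.RightFraction X Y), ψ.s ≫ φ.f = ψ.f ≫ φ.s)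
    (hext : ∀ ⦃X Y Y' : C⦄ (f₁ f₂ : X ⟶ Y) (s : Y ⟶ Y') (_ : W s) (_ : f₁ ≫ s = f₂ ≫ s),
      ∃ (X' : C) (t : X' ⟶ X) (_ : W t), t ≫ f₁ = t ≫ f₂) :
    W.multiplicativeClosure.HasRightCalculusOfFractions where
  exists_rightFraction X Y φ := by
    obtain ⟨f, s, hs⟩ := φ
    induction hs generalizing X with
    | of s hs =>
      obtain ⟨⟨s', hs', f'⟩, fac⟩ := hOre (LeftFraction.mk f s hs)
      exact ⟨RightFraction.mk s' (.of _ hs') f', fac⟩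
    | id Y => exact ⟨RightFraction.mk (𝟙 X) (.id X) f, by simp⟩
    | comp_of s₁ s₂ _ hs₂ ih =>
      obtain ⟨⟨t₂, ht₂, f₂⟩, fac₂⟩ := hOre (LeftFraction.mk f s₂ hs₂)
      obtain ⟨⟨t₁, ht₁, f₁⟩, fac₁⟩ := ih _ f₂
      exact ⟨RightFraction.mk (t₁ ≫ t₂) (.comp_of _ _ ht₁ ht₂) f₁, by
        simp [reassoc_of% fac₁, fac₂]⟩
  ext X Y Y' f₁ f₂ s hs fac := by
    induction hs generalizing X with
    | of s hs =>
      obtain ⟨X', t, ht, fac'⟩ := hext f₁ f₂ s hs fac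
      exact ⟨X', t, .of _ ht, fac'⟩
    | id Y => exact ⟨X, 𝟙 X, .id X, by simpa using fac⟩
    | comp_of s₁ s₂ _ hs₂ ih =>
      obtain ⟨X₂, t₂, ht₂, fac₂⟩ := hext (f₁ ≫ s₁) (f₂ ≫ s₁) s₂ hs₂ (by simpa using fac)
      obtain ⟨X₁, t₁, ht₁, fac₁⟩ := ih _ (t₂ ≫ f₁) (t₂ ≫ f₂) (by simpa using fac₂)
      exact ⟨X₁, t₁ ≫ t₂, .comp_of _ _ ht₁ ht₂, by simpa using fac₁⟩

end MorphismProperty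

end

namespace ObjectProperty

variable {C : Type*} [Category C] [Preadditive C] [HasZeroObject C] [HasShift C ℤ]
  [∀ (n : ℤ), (shiftFunctor C n).Additive] [Pretriangulated C] (P : ObjectProperty C)

lemma trW_exists_leftFraction {X Y : C} (φ : P.trW.RightFraction X Y) :
    ∃ (ψ : P.trW.LeftFraction X Y), φ.f ≫ ψ.s = φ.s ≫ ψ.f := by
  obtain ⟨Z, g, h, hT, hZ⟩ := φ.hs
  obtain ⟨Y', s', f', hT'⟩ := distinguished_cocone_triangle₂ (h ≫ φ.f⟦(1 : ℤ)⟧')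
  obtain ⟨b, hb, -⟩ :=
    complete_distinguished_triangle_morphism₂ _ _ hT hT' φ.f (𝟙 Z) (id_comp _).symm
  exact ⟨MorphismProperty.LeftFraction.mk b s' ⟨_, _, _, hT', hZ⟩, hb.symm⟩

lemma trW_exists_rightFraction {X Y : C} (φ : P.trW.LeftFraction X Y) :
    ∃ (ψ : P.trW.RightFraction X Y), ψ.s ≫ φ.f = ψ.f ≫ φ.s := by
  obtain ⟨Z, g, _, hT, hZ⟩ := φ.hs
  obtain ⟨X', s', _, hT'⟩ := distinguished_cocone_triangle₁ (φ.f ≫ g)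
  obtain ⟨a, ha, -⟩ :=
    complete_distinguished_triangle_morphism₁ _ _ hT' hT φ.f (𝟙 Z) (comp_id _)
  exact ⟨MorphismProperty.RightFraction.mk s' ⟨_, _, _, hT', hZ⟩ a, ha⟩

variable [P.IsStableUnderShift ℤ]

lemma trW_ext_left {X' X Y : C} (f₁ f₂ : X ⟶ Y) (s : X' ⟶ X) (hs : P.trW s)
    (fac : s ≫ f₁ = s ≫ f₂) : ∃ (Y' : C) (t : Y ⟶ Y') (_ : P.trW t), f₁ ≫ t = f₂ ≫ t := by
  obtain ⟨Z, g, _, hT, hZ⟩ := hs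
  have hs₀ : s ≫ (f₁ - f₂) = 0 := by rw [Preadditive.comp_sub, fac, sub_self]
  obtain ⟨q : Z ⟶ Y, hq : f₁ - f₂ = g ≫ q⟩ := Triangle.yoneda_exact₂ _ hT (f₁ - f₂) hs₀
  obtain ⟨Y', t, _, hT'⟩ := distinguished_cocone_triangle q
  have hqt : q ≫ t = 0 := comp_distTriang_mor_zero₁₂ _ hT'
  refine ⟨Y', t, ⟨_, _, _, rot_of_distTriang _ hT', P.le_shift 1 _ hZ⟩, ?_⟩
  rw [← sub_eq_zero, ← Preadditive.sub_comp, hq, assoc, hqt, comp_zero]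

lemma trW_ext_right {X Y Y' : C} (f₁ f₂ : X ⟶ Y) (s : Y ⟶ Y') (hs : P.trW s)
    (fac : f₁ ≫ s = f₂ ≫ s) : ∃ (X' : C) (t : X' ⟶ X) (_ : P.trW t), t ≫ f₁ = t ≫ f₂ := by
  obtain ⟨Z, g, _, hT, hZ⟩ := (P.trW_iff' s).1 hs
  have hs₀ : (f₁ - f₂) ≫ s = 0 := by rw [Preadditive.sub_comp, fac, sub_self]
  obtain ⟨q : X ⟶ Z, hq : f₁ - f₂ = q ≫ g⟩ := Triangle.coyoneda_exact₂ _ hT (f₁ - f₂) hs₀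
  obtain ⟨X', t, _, hT'⟩ := distinguished_cocone_triangle₁ q
  have htq : t ≫ q = 0 := comp_distTriang_mor_zero₁₂ _ hT'
  refine ⟨X', t, ⟨_, _, _, hT', hZ⟩, ?_⟩
  rw [← sub_eq_zero, ← Preadditive.comp_sub, hq, reassoc_of% htq, zero_comp]

instance : P.trW.multiplicativeClosure.HasLeftCalculusOfFractions :=
  P.trW.hasLeftCalculusOfFractions_multiplicativeClosure (fun _ _ ↦ P.trW_exists_leftFraction)
    (fun _ _ _ ↦ P.trW_ext_left)

instance : P.trW.multiplicativeClosure.HasRightCalculusOfFractions :=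
  P.trW.hasRightCalculusOfFractions_multiplicativeClosure (fun _ _ ↦ P.trW_exists_rightFraction)
    (fun _ _ _ ↦ P.trW_ext_right)

end ObjectProperty

/-- The analogue of `ObjectProperty.IsVerdierLeftLocalizing` for a subcategory `R` of `T` given
by a functor `ι`, with `U` playing the role of `R ∩ S`. -/
def Functor.IsVerdierLeftLocalizing {R T : Type*} [Category R] [Category T] (ι : R ⥤ T)
    (S : ObjectProperty T) (U : ObjectProperty R) : Prop :=
  ∀ (X : R) (Y : T), S Y → ∀ f : ι.obj X ⟶ Y,
    ∃ (Z : R) (_ : U Z) (a : X ⟶ Z) (b : ι.obj Z ⟶ Y), ι.map a ≫ b = f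

namespace Functor.IsVerdierLeftLocalizing

variable {R T : Type*}
  [Category R] [Preadditive R] [HasZeroObject R] [HasShift R ℤ]
  [∀ (n : ℤ), (shiftFunctor R n).Additive] [Pretriangulated R]
  [Category T] [Preadditive T] [HasZeroObject T] [HasShift T ℤ]
  [∀ (n : ℤ), (shiftFunctor T n).Additive] [Pretriangulated T]
  {ι : R ⥤ T} {S : ObjectProperty T} {U : ObjectProperty R}

lemma exists_lift_of_trW [ι.PreservesZeroMorphisms] (h : ι.IsVerdierLeftLocalizing S U)
    {Z M : T} {s : Z ⟶ M} (hs : S.trW s) {X : R} (d : ι.obj X ⟶ M) :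
    ∃ (X' : R) (c : X' ⟶ X) (d' : ι.obj X' ⟶ Z), U.trW c ∧ d' ≫ s = ι.map c ≫ d := by
  obtain ⟨N, p, q, hT, hN⟩ := hs
  obtain ⟨Z₀, hZ₀, a, b, hab⟩ := h X N hN (d ≫ p)
  obtain ⟨X', c, _, hT'⟩ := distinguished_cocone_triangle₁ a
  have hca : c ≫ a = 0 := comp_distTriang_mor_zero₁₂ _ hT'
  have hcd : (ι.map c ≫ d) ≫ p = 0 := by
    rw [assoc, ← hab, ← ι.map_comp_assoc, hca, ι.map_zero, zero_comp]
  obtain ⟨d', hd'⟩ := Triangle.coyoneda_exact₂ _ hT _ hcd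
  exact ⟨X', c, d', ⟨_, _, _, hT', hZ₀⟩, hd'.symm⟩

lemma exists_lift [ι.PreservesZeroMorphisms] (h : ι.IsVerdierLeftLocalizing S U)
    {Z M : T} {s : Z ⟶ M} (hs : S.trW.multiplicativeClosure s) {X : R} (d : ι.obj X ⟶ M) :
    ∃ (X' : R) (c : X' ⟶ X) (d' : ι.obj X' ⟶ Z),
      U.trW.multiplicativeClosure c ∧ d' ≫ s = ι.map c ≫ d := by
  induction hs generalizing X with
  | of s hs =>
    obtain ⟨X', c, d', hc, fac⟩ := h.exists_lift_of_trW hs d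
    exact ⟨X', c, d', .of _ hc, fac⟩
  | id M => exact ⟨X, 𝟙 X, d, .id X, by simp⟩
  | comp_of s₁ s₂ _ hs₂ ih =>
    obtain ⟨X₂, c₂, d₂, hc₂, fac₂⟩ := h.exists_lift_of_trW hs₂ d
    obtain ⟨X₁, c₁, d₁, hc₁, fac₁⟩ := ih d₂
    exact ⟨X₁, c₁ ≫ c₂, d₁, .comp_of _ _ hc₁ hc₂, by simp [reassoc_of% fac₁, fac₂]⟩

variable {D₁ D₂ : Type*} [Category D₁] [Category D₂] {L₁ : R ⥤ D₁} {L₂ : T ⥤ D₂}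
  [L₁.IsLocalization U.trW] [L₂.IsLocalization S.trW] {J : D₁ ⥤ D₂}

lemma full_of_iso [ι.PreservesZeroMorphisms] [ι.Full] [S.IsStableUnderShift ℤ]
    (h : ι.IsVerdierLeftLocalizing S U) (e : L₁ ⋙ J ≅ ι ⋙ L₂) : J.Full := by
  have := Localization.essSurj L₁ U.trW
  have nat {X Y : R} (f : X ⟶ Y) :
      J.map (L₁.map f) ≫ e.hom.app Y = e.hom.app X ≫ L₂.map (ι.map f) := e.hom.naturality f
  refine J.full_of_comp_essSurj L₁ fun X Y g ↦ ?_
  obtain ⟨φ, hφ⟩ := Localization.exists_rightFraction L₂ S.trW.multiplicativeClosure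
    (e.inv.app X ≫ g ≫ e.hom.app Y)
  obtain ⟨X', c, d', hc, hd'⟩ := h.exists_lift φ.hs (𝟙 _)
  rw [comp_id] at hd'
  have := Localization.inverts L₁ U.trW.multiplicativeClosure c hc
  refine ⟨CategoryTheory.inv (L₁.map c) ≫ L₁.map (ι.preimage (d' ≫ φ.f)), ?_⟩
  rw [J.map_comp, Functor.map_inv, IsIso.inv_comp_eq, ← cancel_mono (e.hom.app Y), nat,
    ι.map_preimage, assoc]
  calc e.hom.app X' ≫ L₂.map (d' ≫ φ.f)
      = e.hom.app X' ≫ L₂.map (ι.map c) ≫ φ.map L₂ (Localization.inverts _ _) := by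
        rw [← hd', L₂.map_comp, L₂.map_comp, assoc, φ.map_s_comp_map]
    _ = J.map (L₁.map c) ≫ g ≫ e.hom.app Y := by
        rw [← hφ, ← reassoc_of% nat, e.hom_inv_id_app_assoc]

lemma faithful_of_iso [ι.PreservesZeroMorphisms] [ι.Faithful] [S.IsStableUnderShift ℤ]
    [U.IsStableUnderShift ℤ] (h : ι.IsVerdierLeftLocalizing S U) (e : L₁ ⋙ J ≅ ι ⋙ L₂) :
    J.Faithful := by
  have nat {X Y : R} (f : X ⟶ Y) :
      J.map (L₁.map f) ≫ e.hom.app Y = e.hom.app X ≫ L₂.map (ι.map f) := e.hom.naturality f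
  refine Functor.faithful_of_comp_of_hasLeftCalculusOfFractions L₁ U.trW.multiplicativeClosure J
    fun X Y f₁ f₂ hf ↦ ?_
  have hιf : L₂.map (ι.map f₁) = L₂.map (ι.map f₂) := by
    rw [← cancel_epi (e.hom.app X), ← nat, ← nat, hf]
  obtain ⟨Z, t, ht, fac⟩ :=
    (MorphismProperty.map_eq_iff_precomp L₂ S.trW.multiplicativeClosure _ _).1 hιf
  obtain ⟨X', c, d', hc, hd'⟩ := h.exists_lift ht (𝟙 _)
  rw [comp_id] at hd'
  have := Localization.inverts L₁ U.trW.multiplicativeClosure c hc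
  rw [← cancel_epi (L₁.map c), ← L₁.map_comp, ← L₁.map_comp]
  congr 1
  apply ι.map_injective
  rw [ι.map_comp, ι.map_comp, ← hd', assoc, assoc, fac]

end Functor.IsVerdierLeftLocalizing

end CategoryTheory

theorem stmt8_general
    {T : Type u₁} [Category.{v₁} T] [Preadditive T] [HasZeroObject T]
    [HasShift T ℤ] [∀ (n : ℤ), (shiftFunctor T n).Additive] [Pretriangulated T]
    {R : Type u₂} [Category.{v₂} R] [Preadditive R] [HasZeroObject R]
    [HasShift R ℤ] [∀ (n : ℤ), (shiftFunctor R n).Additive] [Pretriangulated R]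
    (ι : R ⥤ T) [ι.CommShift ℤ] [ι.IsTriangulated] [ι.Full] [ι.Faithful]
    (S : ObjectProperty T) [S.IsTriangulated] (U : ObjectProperty R) [U.IsTriangulated]
    -- every morphism from an object of `R` to an object of `S` factors
    -- through an object of `U`
    (hfact : ∀ (X : R) (Y : T), S Y → ∀ f : ι.obj X ⟶ Y,
      ∃ (Z : R) (_ : U Z) (a : X ⟶ Z) (b : ι.obj Z ⟶ Y), ι.map a ≫ b = f) :
    ∀ (J : U.trW.Localization ⥤ S.trW.Localization)
      (_ : Localization.Lifting U.trW.Q U.trW (ι ⋙ S.trW.Q) J),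
      J.Full ∧ J.Faithful := by
  intro J _
  have h : ι.IsVerdierLeftLocalizing S U := hfact
  let e := Localization.Lifting.iso U.trW.Q U.trW (ι ⋙ S.trW.Q) J
  exact ⟨h.full_of_iso e, h.faithful_of_iso e⟩

theorem stmt8
    {T : Type u₁} [Category.{v₁} T] [Preadditive T] [HasZeroObject T]
    [HasShift T ℤ] [∀ (n : ℤ), (shiftFunctor T n).Additive] [Pretriangulated T]
    {R : Type u₂} [Category.{v₂} R] [Preadditive R] [HasZeroObject R]
    [HasShift R ℤ] [∀ (n : ℤ), (shiftFunctor R n).Additive] [Pretriangulated R]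
    (ι : R ⥤ T) [ι.CommShift ℤ] [ι.IsTriangulated] [ι.Full] [ι.Faithful]
    (S : ObjectProperty T) [S.IsTriangulated] (U : ObjectProperty R) [U.IsTriangulated]
    -- `U = S ∩ R`
    (hU : ∀ X : R, U X ↔ S (ι.obj X))
    -- every morphism from an object of `R` to an object of `S` factors
    -- through an object of `U`
    (hfact : ∀ (X : R) (Y : T), S Y → ∀ f : ι.obj X ⟶ Y,
      ∃ (Z : R) (_ : U Z) (a : X ⟶ Z) (b : ι.obj Z ⟶ Y), ι.map a ≫ b = f) :
    ∀ (J : U.trW.Localization ⥤ S.trW.Localization)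
      (_ : Localization.Lifting U.trW.Q U.trW (ι ⋙ S.trW.Q) J),
      J.Full ∧ J.Faithful :=
  stmt8_general ι S U hfact
end

section
/- Let T be a triangulated category, E a class of objects, and J the class of cophantom morphisms (f : X → Y with Hom(f, C) = 0 for all C ∈ E). Let n > 0 and let C be an object that is a direct summand of an object built as an n-fold extension of products of objects of E. Then for any morphism f : X → Y in J^n (an n-fold composite of cophantom morphisms), the induced map Hom_T(Y, C) → Hom_T(X, C) is zero. -/
/-!
STATEMENT 15: Let `T` be a triangulated category, `E` a class of objects, and
`J` the class of cophantom morphisms (those `f : X ⟶ Y` with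
`Hom(f, C) = 0` for all `C ∈ E`).  Let `n > 0` and let `C` be an object of
`[E]-bar_n` (a direct summand of an object built as an `n`-fold extension of
products of objects of `E`).  Then for any morphism `f : X ⟶ Y` in `J^n`
(an `n`-fold composite of cophantom morphisms), the induced map
`Hom_T(Y, C) → Hom_T(X, C)` is zero.
-/

open CategoryTheory CategoryTheory.Limits CategoryTheory.Pretriangulated
  CategoryTheory.Triangulated

section

variable {C : Type u} [Category.{v} C] [Preadditive C] [HasZeroObject C]
  [HasShift C ℤ] [∀ (n : ℤ), (shiftFunctor C n).Additive] [Pretriangulated C]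

/-- A morphism is cophantom w.r.t. a class `E` if every composite into an
object of `E` vanishes. -/
def Cophantom (E : C → Prop) {X Y : C} (f : X ⟶ Y) : Prop :=
  ∀ (Z : C), E Z → ∀ g : Y ⟶ Z, f ≫ g = 0

/-- `IsNCophantom E n f` says `f` is a composite of `n` cophantom morphisms. -/
inductive IsNCophantom (E : C → Prop) : ℕ → ∀ {X Y : C}, (X ⟶ Y) → Prop where
  | one {X Y : C} (f : X ⟶ Y) (hf : Cophantom E f) : IsNCophantom E 1 f
  | comp {n : ℕ} {X Y Z : C} (f : X ⟶ Y) (g : Y ⟶ Z) (hf : Cophantom E f)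
      (hg : IsNCophantom E n g) : IsNCophantom E (n + 1) (f ≫ g)

/-- `BarClosure E n X` : `X` belongs to `[E]-bar_n`, i.e. `X` is a direct
summand of an `n`-fold extension of products of objects of `E`. -/
inductive BarClosure (E : C → Prop) : ℕ → C → Prop where
  | prodSummand {ι : Type v} (Y : ι → C) [HasProduct Y] (hY : ∀ i, E (Y i))
      (X : C) (s : X ⟶ ∏ᶜ Y) (r : ∏ᶜ Y ⟶ X) (hr : s ≫ r = 𝟙 X) :
      BarClosure E 1 X
  | extSummand {n : ℕ} {C₁ Z C₂ X : C} (f : C₁ ⟶ Z) (g : Z ⟶ C₂)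
      (h : C₂ ⟶ C₁⟦(1 : ℤ)⟧) (hdist : Triangle.mk f g h ∈ distTriang C)
      (h₁ : BarClosure E 1 C₁) (h₂ : BarClosure E n C₂)
      (s : X ⟶ Z) (r : Z ⟶ X) (hr : s ≫ r = 𝟙 X) :
      BarClosure E (n + 1) X

end

/-!
Induction along the construction of `[E]-bar_n`. A cophantom kills maps into products of objects
of `E`, hence into `[E]-bar_1`. For `C` a summand of an extension `C₁ → Z → C₂` with
`C₂ ∈ [E]-bar_{n-1}`, write the `n`-fold cophantom as `f₁ ≫ f₂`: by induction `f₂ ≫ g` dies in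
`C₂`, so by exactness of `Hom(-, C₁) → Hom(-, Z) → Hom(-, C₂)` it factors through `C₁`, where
`f₁` kills it.
-/

section Preadditive

variable {C : Type u} [Category.{v} C] [Preadditive C]

lemma IsNCophantom.cophantom {E : C → Prop} {n : ℕ} {X Y : C} {f : X ⟶ Y}
    (hf : IsNCophantom E n f) : Cophantom E f := by
  induction hf with
  | one f hf => exact hf
  | comp f g hf _ _ => exact fun Z hZ k => by rw [Category.assoc]; exact hf Z hZ (g ≫ k)

lemma Cophantom.comp_eq_zero_of_piObj {E : C → Prop} {X Y : C} {f : X ⟶ Y}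
    (hf : Cophantom E f) {ι : Type v} (Z : ι → C) [HasProduct Z] (hZ : ∀ i, E (Z i))
    (g : Y ⟶ ∏ᶜ Z) : f ≫ g = 0 :=
  Pi.hom_ext _ _ fun i => by simpa using hf _ (hZ i) (g ≫ Pi.π Z i)

end Preadditive

section

variable {C : Type u} [Category.{v} C] [Preadditive C] [HasZeroObject C]
  [HasShift C ℤ] [∀ (n : ℤ), (shiftFunctor C n).Additive] [Pretriangulated C]

lemma BarClosure.pos {E : C → Prop} {n : ℕ} {X : C} (h : BarClosure E n X) : 0 < n := by
  cases h <;> omega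

lemma Cophantom.barClosure_one {E : C → Prop} {X Y : C} {f : X ⟶ Y} (hf : Cophantom E f) :
    Cophantom (BarClosure E 1) f := by
  rintro W (⟨Z, hZ, W, s, r, hr⟩ | ⟨_, _, _, _, _, h₂, _, _, _⟩) g
  · have : IsSplitMono s := .mk' ⟨r, hr⟩
    exact zero_of_comp_mono s (by simpa using hf.comp_eq_zero_of_piObj Z hZ (g ≫ s))
  · exact absurd h₂.pos (lt_irrefl 0)

lemma comp_eq_zero_of_distinguished (T : Triangle C) (hT : T ∈ distTriang C) {X Y : C}
    (a : X ⟶ Y) (b : Y ⟶ T.obj₂) (ha : ∀ e : Y ⟶ T.obj₁, a ≫ e = 0) (hb : b ≫ T.mor₂ = 0) :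
    a ≫ b = 0 := by
  obtain ⟨e, rfl⟩ := Triangle.coyoneda_exact₂ T hT b hb
  rw [← Category.assoc, ha, zero_comp]

theorem stmt15_general (E : C → Prop) (n : ℕ)
    (Cobj : C) (hC : BarClosure E n Cobj)
    {X Y : C} (f : X ⟶ Y) (hf : IsNCophantom E n f) :
    ∀ g : Y ⟶ Cobj, f ≫ g = 0 := by
  induction hC generalizing X Y f with
  | prodSummand Z hZ W s r hr =>
    exact hf.cophantom.barClosure_one W (.prodSummand Z hZ W s r hr)
  | extSummand u v w hdist h₁ h₂ s r hr _ ih₂ =>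
    intro g
    have : IsSplitMono s := .mk' ⟨r, hr⟩
    cases hf with
    | one => exact absurd h₂.pos (lt_irrefl 0)
    | comp f₁ f₂ hf₁ hf₂ =>
      refine zero_of_comp_mono s ?_
      simp only [Category.assoc]
      refine comp_eq_zero_of_distinguished _ hdist f₁ (f₂ ≫ g ≫ s) (hf₁.barClosure_one _ h₁) ?_
      exact (Category.assoc _ _ _).trans (ih₂ f₂ hf₂ ((g ≫ s) ≫ v))

theorem stmt15 (E : C → Prop) (n : ℕ) (hn : 0 < n)
    (Cobj : C) (hC : BarClosure E n Cobj)
    {X Y : C} (f : X ⟶ Y) (hf : IsNCophantom E n f) :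
    ∀ g : Y ⟶ Cobj, f ≫ g = 0 :=
  stmt15_general E n Cobj hC f hf

end
end

section
/- Let T be a triangulated category with a class E of objects, and suppose F ∈ T is a direct summand of an object of [E]-bar_4 (four-fold extensions of products of E-objects, closed under summands). Suppose there is a triangle D → F → F' → D[1] where the map g : D → F is a composite of 4 cophantom morphisms with respect to E. Then g = 0 and F is a direct summand of F'. -/
/-!
STATEMENT 16: Let `T` be a triangulated category with a class `E` of objects,
and suppose `F ∈ T` is a direct summand of an object of `[E]-bar_4` (the
four-fold extensions of products of `E`-objects, closed under summands).
Suppose there is a triangle `D → F → F' → D[1]` where the map `g : D → F` is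
a composite of `4` cophantom morphisms with respect to `E`.  Then `g = 0` and
`F` is a direct summand of `F'`.
-/

open CategoryTheory CategoryTheory.Limits CategoryTheory.Pretriangulated
  CategoryTheory.Triangulated

section

variable {C : Type u} [Category.{v} C] [Preadditive C] [HasZeroObject C]
  [HasShift C ℤ] [∀ (n : ℤ), (shiftFunctor C n).Additive] [Pretriangulated C]

/-!
A cophantom map kills maps into products of objects of `E`, hence into `[E]-bar_1`. Inductively,
if `g = f ≫ g'` with `f` cophantom and `g' ∈ J^n`, and `C₁ → Z → C₂ → C₁[1]` exhibits `Z` as an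
extension with `C₁ ∈ [E]-bar_1`, `C₂ ∈ [E]-bar_n`, then any `g' ≫ h` into `Z` dies in `C₂`, so it
factors through `C₁`, where `f` kills it. Hence `g ∈ J^4` vanishes on maps into `[E]-bar_4`, in
particular on the split mono `F ⟶ Z`; so `g = 0`, and a triangle whose first map is zero splits.
-/

lemma eq_zero_of_comp_eq_zero_of_retraction {𝒜 : Type*} [Category 𝒜] [HasZeroMorphisms 𝒜]
    {X Y Z : 𝒜} {φ : X ⟶ Y} {s : Y ⟶ Z} {r : Z ⟶ Y} (hsr : s ≫ r = 𝟙 Y) (h : φ ≫ s = 0) : φ = 0 :=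
  have : Mono s := (SplitMono.mk r hsr).mono
  zero_of_comp_mono s h

section

variable {E : C → Prop}

lemma Cophantom.comp_eq_zero_of_barClosure_one {X Y W : C} {f : X ⟶ Y} (hf : Cophantom E f)
    (hW : BarClosure E 1 W) (h : Y ⟶ W) : f ≫ h = 0 := by
  cases hW with
  | prodSummand Y hY W s r hsr =>
    refine eq_zero_of_comp_eq_zero_of_retraction hsr (limit.hom_ext fun j ↦ ?_)
    simpa only [Category.assoc, zero_comp] using hf _ (hY j.as) _
  | extSummand _ _ _ _ _ h₂ _ _ _ => cases h₂

lemma IsNCophantom.comp_eq_zero_of_barClosure {n : ℕ} {X Y : C} {g : X ⟶ Y}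
    (hg : IsNCophantom E n g) {W : C} (hW : BarClosure E n W) (h : Y ⟶ W) : g ≫ h = 0 := by
  induction hg generalizing W with
  | one f hf => exact hf.comp_eq_zero_of_barClosure_one hW h
  | comp f g' hf hg' ih =>
    cases hW with
    | prodSummand _ _ _ _ _ _ => cases hg'
    | extSummand i p q hT h₁ h₂ s r hsr =>
      refine eq_zero_of_comp_eq_zero_of_retraction hsr ?_
      have hp : (g' ≫ h ≫ s) ≫ p = 0 := by
        simpa only [Category.assoc] using ih h₂ (h ≫ s ≫ p)
      obtain ⟨k, hk⟩ : ∃ k, g' ≫ h ≫ s = k ≫ i := Triangle.coyoneda_exact₂ _ hT _ hp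
      have hfk : f ≫ k = 0 := hf.comp_eq_zero_of_barClosure_one h₁ k
      calc ((f ≫ g') ≫ h) ≫ s = f ≫ g' ≫ h ≫ s := by simp only [Category.assoc]
        _ = f ≫ k ≫ i := by rw [hk]
        _ = 0 := by rw [reassoc_of% hfk, zero_comp]

end

theorem stmt16 (E : C → Prop)
    -- `F` is a direct summand of an object of `[E]-bar_4`
    (F : C) (Z : C) (hZ : BarClosure E 4 Z)
    (s : F ⟶ Z) (r : Z ⟶ F) (hsr : s ≫ r = 𝟙 F)
    -- a triangle `D → F → F' → D[1]` with `g ∈ J^4`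
    (D F' : C) (g : D ⟶ F) (u : F ⟶ F') (v : F' ⟶ D⟦(1 : ℤ)⟧)
    (hdist : Triangle.mk g u v ∈ distTriang C)
    (hg : IsNCophantom E 4 g) :
    g = 0 ∧ ∃ p : F' ⟶ F, u ≫ p = 𝟙 F := by
  have hg0 : g = 0 :=
    eq_zero_of_comp_eq_zero_of_retraction hsr (hg.comp_eq_zero_of_barClosure hZ s)
  have : Mono u := Triangle.mono₂ _ hdist hg0
  have := isSplitMono_of_mono u
  exact ⟨hg0, retraction u, IsSplitMono.id u⟩

end
end
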